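/- arXiv:quant-ph/0612013 — 5 statements merged into one kernel-verified Lean document; each statement's English description precedes it below -/
import Mathlib

section
/- Every 2-dimensional subspace of ℂ² ⊗ ℂ² contains a nonzero product vector (a vector of the form a ⊗ b). -/
/-!
A vector `w` of `ℂ² ⊗ ℂ²`, read as the `2 × 2` matrix of its coordinates, is a product vector
exactly when that matrix has rank at most one, i.e. when its determinant vanishes. On a plane
spanned by `u` and `v` the determinant of `s • u + t • v` is a binary quadratic form in `(s, t)`,
and over the algebraically closed field `ℂ` such a form has a nontrivial zero.
-/

/-- The elementary tensor `a ⊗ b` of two Euclidean-space vectors, realised in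
`EuclideanSpace ℂ (ι × κ)` (which carries the induced tensor inner product). -/
noncomputable def tens {ι κ : Type*} [Fintype ι] [Fintype κ]
    (a : EuclideanSpace ℂ ι) (b : EuclideanSpace ℂ κ) :
    EuclideanSpace ℂ (ι × κ) :=
  WithLp.toLp 2 (fun p : ι × κ => a p.1 * b p.2)

/-- The standard basis vector `eᵢ` of `ℂ²`. -/
noncomputable def e (i : Fin 2) : EuclideanSpace ℂ (Fin 2) := EuclideanSpace.single i 1

lemma tens_eq_iff {ι κ : Type*} [Fintype ι] [Fintype κ] {a : EuclideanSpace ℂ ι}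
    {b : EuclideanSpace ℂ κ} {w : EuclideanSpace ℂ (ι × κ)} :
    tens a b = w ↔ ∀ i j, a i * b j = w (i, j) := by
  simp [tens, PiLp.ext_iff, Prod.forall]

def coeffDet (w : EuclideanSpace ℂ (Fin 2 × Fin 2)) : ℂ :=
  w (0, 0) * w (1, 1) - w (0, 1) * w (1, 0)

lemma exists_tens_eq_of_coeffDet_eq_zero {w : EuclideanSpace ℂ (Fin 2 × Fin 2)}
    (hw : coeffDet w = 0) : ∃ a b : EuclideanSpace ℂ (Fin 2), tens a b = w := by
  rw [coeffDet, sub_eq_zero] at hw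
  rcases eq_or_ne (w (0, 0)) 0 with h00 | h00
  · rcases mul_eq_zero.1 (show w (0, 1) * w (1, 0) = 0 by rw [← hw, h00, zero_mul])
      with h01 | h10
    · exact ⟨!₂[0, 1], !₂[w (1, 0), w (1, 1)], by
        simp [tens_eq_iff, Fin.forall_fin_two, h00, h01]⟩
    · exact ⟨!₂[w (0, 1), w (1, 1)], !₂[0, 1], by
        simp [tens_eq_iff, Fin.forall_fin_two, h00, h10]⟩
  · refine ⟨!₂[w (0, 0), w (1, 0)], !₂[1, w (0, 1) / w (0, 0)], ?_⟩
    simp only [tens_eq_iff, Fin.forall_fin_two, Matrix.cons_val_zero, Matrix.cons_val_one,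
      Matrix.cons_val_fin_one, mul_one, true_and]
    refine ⟨mul_div_cancel₀ _ h00, ?_⟩
    field_simp
    linear_combination hw.symm

lemma exists_coeffDet_smul_add_smul_eq (u v : EuclideanSpace ℂ (Fin 2 × Fin 2)) :
    ∃ b : ℂ, ∀ s t : ℂ,
      coeffDet (s • u + t • v) = coeffDet u * s ^ 2 + b * s * t + coeffDet v * t ^ 2 :=
  ⟨u (0, 0) * v (1, 1) + v (0, 0) * u (1, 1) - u (0, 1) * v (1, 0) - v (0, 1) * u (1, 0),
    fun s t => by simp only [coeffDet, PiLp.add_apply, PiLp.smul_apply, smul_eq_mul]; ring⟩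

open Polynomial in
lemma IsAlgClosed.exists_ne_zero_binary_quadratic_eq_zero {K : Type*} [Field K] [IsAlgClosed K]
    (a b c : K) : ∃ s t : K, ¬(s = 0 ∧ t = 0) ∧ a * s ^ 2 + b * s * t + c * t ^ 2 = 0 := by
  rcases eq_or_ne a 0 with rfl | ha
  · exact ⟨1, 0, by simp⟩
  obtain ⟨x, hx⟩ := IsAlgClosed.exists_root (C a * X ^ 2 + C b * X + C c)
    (by rw [degree_quadratic ha]; decide)
  exact ⟨x, 1, by simp, by simpa using hx⟩

lemma Submodule.exists_linearIndependent_pair_of_finrank_eq_two {K V : Type*} [Field K]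
    [AddCommGroup V] [Module K V] {p : Submodule K V} (hp : Module.finrank K p = 2) :
    ∃ u ∈ p, ∃ v ∈ p, LinearIndependent K ![u, v] := by
  have : Module.Finite K p := Module.finite_of_finrank_eq_succ hp
  let B := Module.finBasisOfFinrankEq K p hp
  refine ⟨B 0, (B 0).2, B 1, (B 1).2, ?_⟩
  have hB : ![(B 0 : V), B 1] = fun i => (B i : V) := by
    ext i
    fin_cases i <;> rfl
  exact hB ▸ B.linearIndependent.map' p.subtype p.ker_subtype

theorem stmt_4 (p : Submodule ℂ (EuclideanSpace ℂ (Fin 2 × Fin 2)))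
    (hp : Module.finrank ℂ p = 2) :
    ∃ (a b : EuclideanSpace ℂ (Fin 2)), tens a b ≠ 0 ∧ tens a b ∈ p := by
  obtain ⟨u, hu, v, hv, huv⟩ := p.exists_linearIndependent_pair_of_finrank_eq_two hp
  obtain ⟨c, hc⟩ := exists_coeffDet_smul_add_smul_eq u v
  obtain ⟨s, t, hst, hdet⟩ :=
    IsAlgClosed.exists_ne_zero_binary_quadratic_eq_zero (coeffDet u) c (coeffDet v)
  obtain ⟨a, b, hab⟩ := exists_tens_eq_of_coeffDet_eq_zero ((hc s t).trans hdet)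
  refine ⟨a, b, hab ▸ fun h => hst (LinearIndependent.pair_iff.1 huv s t h), ?_⟩
  exact hab ▸ p.add_mem (p.smul_mem s hu) (p.smul_mem t hv)
end

section
/- Let ψ₁ = α₁·(e₀ ⊗ e₀) + α₂·(e₁ ⊗ e₁) and ψ₂ = β₁·(e₀ ⊗ e₁) + β₂·(e₁ ⊗ e₀) in ℂ² ⊗ ℂ², where α₁, α₂, β₁, β₂ are all nonzero complex numbers. Then the span of {ψ₁, ψ₂} admits a basis consisting of two product vectors, and the orthogonal complement of span{ψ₁, ψ₂} in ℂ² ⊗ ℂ² also admits a basis consisting of two product vectors. -/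
/-!
Write `ψ₁ = a₁ e₀₀ + a₂ e₁₁` and `ψ₂ = b₁ e₀₁ + b₂ e₁₀`. If `c² = a₂ b₂ / (a₁ b₁)`, the product
vectors `(1, ±c) ⊗ (±a₁ c, a₂)` equal `±c ψ₁ + (a₂ / b₁) ψ₂`, so they are two independent product
vectors in the span, which has dimension at most two. The vectors of the same shape with coefficients
`(conj a₂, -conj a₁)` and `(conj b₂, -conj b₁)` are orthogonal to `ψ₁` and `ψ₂`, so the same
construction gives two independent product vectors in the complement, which has dimension two.
-/

open Module Submodule
open scoped ComplexConjugate InnerProductSpace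

section

variable {K V : Type*} [Field K] [AddCommGroup V] [Module K V]

theorem finrank_span_pair_le (x y : V) : finrank K (span K {x, y}) ≤ 2 := by
  have := finrank_range_le_card (R := K) ![x, y]
  rwa [Matrix.range_cons_cons_empty, Fintype.card_fin] at this

theorem finrank_span_pair_of_linearIndependent {x y : V} (h : LinearIndependent K ![x, y]) :
    finrank K (span K {x, y}) = 2 := by
  have := finrank_span_eq_card h
  rwa [Matrix.range_cons_cons_empty, Fintype.card_fin] at this

theorem Submodule.eq_span_pair_of_finrank_le {W : Submodule K V} [FiniteDimensional K W]
    {x y : V} (h : LinearIndependent K ![x, y]) (hx : x ∈ W) (hy : y ∈ W)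
    (hW : finrank K W ≤ 2) : W = span K {x, y} :=
  (eq_of_le_of_finrank_le (span_le.2 (Set.insert_subset hx (Set.singleton_subset_iff.2 hy)))
    (finrank_span_pair_of_linearIndependent h ▸ hW)).symm

end

@[simp]
theorem tens_apply {ι κ : Type*} [Fintype ι] [Fintype κ] (a : EuclideanSpace ℂ ι)
    (b : EuclideanSpace ℂ κ) (p : ι × κ) : tens a b p = a p.1 * b p.2 :=
  rfl

theorem inner_tens_tens {ι κ : Type*} [Fintype ι] [Fintype κ] (a c : EuclideanSpace ℂ ι)
    (b d : EuclideanSpace ℂ κ) : ⟪tens a b, tens c d⟫_ℂ = ⟪a, c⟫_ℂ * ⟪b, d⟫_ℂ := by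
  simp only [PiLp.inner_apply, tens_apply, Fintype.sum_prod_type, Finset.sum_mul_sum,
    RCLike.inner_apply, map_mul]
  exact Finset.sum_congr rfl fun _ _ => Finset.sum_congr rfl fun _ _ => by ring

theorem inner_e_e (i j : Fin 2) : ⟪e i, e j⟫_ℂ = if i = j then 1 else 0 := by
  simp [e, EuclideanSpace.inner_single_left, PiLp.single_apply]

noncomputable def tensDiag (a₁ a₂ : ℂ) : EuclideanSpace ℂ (Fin 2 × Fin 2) :=
  a₁ • tens (e 0) (e 0) + a₂ • tens (e 1) (e 1)

noncomputable def tensAntidiag (b₁ b₂ : ℂ) : EuclideanSpace ℂ (Fin 2 × Fin 2) :=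
  b₁ • tens (e 0) (e 1) + b₂ • tens (e 1) (e 0)

theorem inner_tensDiag_tensDiag (a₁ a₂ c₁ c₂ : ℂ) :
    ⟪tensDiag a₁ a₂, tensDiag c₁ c₂⟫_ℂ = conj a₁ * c₁ + conj a₂ * c₂ := by
  simp only [tensDiag, inner_add_left, inner_add_right, inner_smul_left, inner_smul_right,
    inner_tens_tens, inner_e_e]
  norm_num
  ring

theorem inner_tensAntidiag_tensAntidiag (b₁ b₂ d₁ d₂ : ℂ) :
    ⟪tensAntidiag b₁ b₂, tensAntidiag d₁ d₂⟫_ℂ = conj b₁ * d₁ + conj b₂ * d₂ := by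
  simp only [tensAntidiag, inner_add_left, inner_add_right, inner_smul_left, inner_smul_right,
    inner_tens_tens, inner_e_e]
  norm_num
  ring

theorem inner_tensDiag_tensAntidiag (a₁ a₂ b₁ b₂ : ℂ) :
    ⟪tensDiag a₁ a₂, tensAntidiag b₁ b₂⟫_ℂ = 0 := by
  simp only [tensDiag, tensAntidiag, inner_add_left, inner_add_right, inner_smul_left,
    inner_smul_right, inner_tens_tens, inner_e_e]
  norm_num

theorem inner_tensAntidiag_tensDiag (a₁ a₂ b₁ b₂ : ℂ) :
    ⟪tensAntidiag b₁ b₂, tensDiag a₁ a₂⟫_ℂ = 0 := by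
  rw [← inner_conj_symm, inner_tensDiag_tensAntidiag, map_zero]

theorem span_tensDiag_tensAntidiag_le_orthogonal (a₁ a₂ b₁ b₂ : ℂ) :
    span ℂ {tensDiag (conj a₂) (-conj a₁), tensAntidiag (conj b₂) (-conj b₁)} ≤
      (span ℂ {tensDiag a₁ a₂, tensAntidiag b₁ b₂})ᗮ := by
  refine (isOrtho_span.2 ?_).symm
  rintro u (rfl | rfl) v (rfl | rfl) <;>
    simp only [inner_tensDiag_tensDiag, inner_tensAntidiag_tensAntidiag,
      inner_tensDiag_tensAntidiag, inner_tensAntidiag_tensDiag] <;>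
    ring

theorem tens_eq_smul_tensDiag_add_smul_tensAntidiag {a₁ a₂ b₁ b₂ c : ℂ} (hb₁ : b₁ ≠ 0)
    (hc : a₁ * b₁ * c ^ 2 = a₂ * b₂) :
    tens !₂[1, c] !₂[a₁ * c, a₂] = c • tensDiag a₁ a₂ + (a₂ / b₁) • tensAntidiag b₁ b₂ := by
  ext ⟨i, j⟩
  fin_cases i <;> fin_cases j <;> simp [tensDiag, tensAntidiag, e]
  · ring
  · field_simp
  · field_simp
    linear_combination hc

theorem exists_linearIndependent_tens_mem_span {a₁ a₂ b₁ b₂ : ℂ} (ha₁ : a₁ ≠ 0) (ha₂ : a₂ ≠ 0)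
    (hb₁ : b₁ ≠ 0) (hb₂ : b₂ ≠ 0) :
    ∃ x₁ y₁ x₂ y₂ : EuclideanSpace ℂ (Fin 2),
      LinearIndependent ℂ ![tens x₁ y₁, tens x₂ y₂] ∧
      tens x₁ y₁ ∈ span ℂ {tensDiag a₁ a₂, tensAntidiag b₁ b₂} ∧
      tens x₂ y₂ ∈ span ℂ {tensDiag a₁ a₂, tensAntidiag b₁ b₂} := by
  obtain ⟨c, hc⟩ := IsAlgClosed.exists_pow_nat_eq (a₂ * b₂ / (a₁ * b₁)) two_pos
  replace hc : a₁ * b₁ * c ^ 2 = a₂ * b₂ := by rw [hc]; field_simp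
  have hc₀ : c ≠ 0 := by
    rintro rfl
    exact mul_ne_zero ha₂ hb₂ (by simpa using hc.symm)
  refine ⟨!₂[1, c], !₂[a₁ * c, a₂], !₂[1, -c], !₂[a₁ * -c, a₂], ?_, ?_, ?_⟩
  · refine LinearIndependent.pair_iff.2 fun s t hst => ?_
    have h₀₀ : (s - t) * (a₁ * c) = 0 := by
      simpa [mul_neg, ← sub_eq_add_neg, ← sub_mul] using congr_arg (· (0, 0)) hst
    have h₀₁ : (s + t) * a₂ = 0 := by
      simpa [← add_mul] using congr_arg (· (0, 1)) hst
    have hst₁ : s - t = 0 := (mul_eq_zero.1 h₀₀).resolve_right (mul_ne_zero ha₁ hc₀)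
    have hst₂ : s + t = 0 := (mul_eq_zero.1 h₀₁).resolve_right ha₂
    exact ⟨by linear_combination (hst₁ + hst₂) / 2, by linear_combination (hst₂ - hst₁) / 2⟩
  · rw [tens_eq_smul_tensDiag_add_smul_tensAntidiag hb₁ hc]
    exact mem_span_pair.2 ⟨_, _, rfl⟩
  · rw [tens_eq_smul_tensDiag_add_smul_tensAntidiag hb₁ (by rwa [neg_sq])]
    exact mem_span_pair.2 ⟨_, _, rfl⟩

theorem stmt_5 (α₁ α₂ β₁ β₂ : ℂ) (hα₁ : α₁ ≠ 0) (hα₂ : α₂ ≠ 0)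
    (hβ₁ : β₁ ≠ 0) (hβ₂ : β₂ ≠ 0)
    (ψ₁ ψ₂ : EuclideanSpace ℂ (Fin 2 × Fin 2))
    (hψ₁ : ψ₁ = α₁ • tens (e 0) (e 0) + α₂ • tens (e 1) (e 1))
    (hψ₂ : ψ₂ = β₁ • tens (e 0) (e 1) + β₂ • tens (e 1) (e 0)) :
    (∃ (a₁ b₁ a₂ b₂ : EuclideanSpace ℂ (Fin 2)),
      LinearIndependent ℂ ![tens a₁ b₁, tens a₂ b₂] ∧
      Submodule.span ℂ {ψ₁, ψ₂} = Submodule.span ℂ {tens a₁ b₁, tens a₂ b₂}) ∧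
    (∃ (a₁ b₁ a₂ b₂ : EuclideanSpace ℂ (Fin 2)),
      LinearIndependent ℂ ![tens a₁ b₁, tens a₂ b₂] ∧
      (Submodule.span ℂ {ψ₁, ψ₂})ᗮ = Submodule.span ℂ {tens a₁ b₁, tens a₂ b₂}) := by
  obtain rfl : ψ₁ = tensDiag α₁ α₂ := hψ₁
  obtain rfl : ψ₂ = tensAntidiag β₁ β₂ := hψ₂
  set S := span ℂ {tensDiag α₁ α₂, tensAntidiag β₁ β₂}
  obtain ⟨x₁, y₁, x₂, y₂, hx, hx₁, hx₂⟩ := exists_linearIndependent_tens_mem_span hα₁ hα₂ hβ₁ hβ₂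
  have hS : S = span ℂ {tens x₁ y₁, tens x₂ y₂} :=
    S.eq_span_pair_of_finrank_le hx hx₁ hx₂ (finrank_span_pair_le _ _)
  have hSperp : finrank ℂ Sᗮ = 2 := finrank_add_finrank_orthogonal' <| by
    rw [hS, finrank_span_pair_of_linearIndependent hx, finrank_euclideanSpace]
    simp
  obtain ⟨u₁, v₁, u₂, v₂, hu, hu₁, hu₂⟩ := exists_linearIndependent_tens_mem_span
    (star_ne_zero.2 hα₂) (neg_ne_zero.2 (star_ne_zero.2 hα₁))
    (star_ne_zero.2 hβ₂) (neg_ne_zero.2 (star_ne_zero.2 hβ₁))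
  have horth := span_tensDiag_tensAntidiag_le_orthogonal α₁ α₂ β₁ β₂
  exact ⟨⟨x₁, y₁, x₂, y₂, hx, hS⟩, u₁, v₁, u₂, v₂, hu,
    Sᗮ.eq_span_pair_of_finrank_le hu (horth hu₁) (horth hu₂) hSperp.le⟩
end

section
/- Let ψ₁, ψ₂, ψ₃ ∈ ℂ² ⊗ ℂ² be linearly independent, and suppose the orthogonal complement of span{ψ₁, ψ₂} is spanned by two product vectors. Then there exists a product vector φ = a ⊗ b with ⟨ψ₁, φ⟩ = 0, ⟨ψ₂, φ⟩ = 0, and ⟨ψ₃, φ⟩ ≠ 0. -/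
open Submodule

theorem LinearIndependent.notMem_span_pair_of_three {R M : Type*} [Ring R] [Nontrivial R]
    [AddCommGroup M] [Module R M] {x y z : M} (h : LinearIndependent R ![x, y, z]) :
    z ∉ span R {x, y} := by
  have hz := h.notMem_span_image (x := 2) (s := {0, 1}) (by decide)
  rwa [Set.image_pair] at hz

/-- Since `K = Kᗮᗮ`, a vector outside `K` cannot be orthogonal to all of `Kᗮ`. -/
theorem exists_inner_ne_zero_of_orthogonal_eq_span {𝕜 E : Type*} [RCLike 𝕜]
    [NormedAddCommGroup E] [InnerProductSpace 𝕜 E] {K : Submodule 𝕜 E}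
    [K.HasOrthogonalProjection] {s : Set E} (hK : Kᗮ = span 𝕜 s) {x : E} (hx : x ∉ K) :
    ∃ g ∈ s, inner 𝕜 x g ≠ 0 := by
  by_contra! hs
  refine hx (K.orthogonal_orthogonal ▸ ?_)
  have hspan : span 𝕜 s ≤ LinearMap.ker (innerₛₗ 𝕜 x) := span_le.2 hs
  exact (mem_orthogonal' _ _).2 fun u hu => hspan (hK ▸ hu)

theorem stmt_7 (ψ₁ ψ₂ ψ₃ : EuclideanSpace ℂ (Fin 2 × Fin 2))
    (h : LinearIndependent ℂ ![ψ₁, ψ₂, ψ₃])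
    (hperp : ∃ (a₁ b₁ a₂ b₂ : EuclideanSpace ℂ (Fin 2)),
      (Submodule.span ℂ {ψ₁, ψ₂})ᗮ = Submodule.span ℂ {tens a₁ b₁, tens a₂ b₂}) :
    ∃ (a b : EuclideanSpace ℂ (Fin 2)),
      (inner ℂ ψ₁ (tens a b) : ℂ) = 0 ∧ (inner ℂ ψ₂ (tens a b) : ℂ) = 0 ∧
      (inner ℂ ψ₃ (tens a b) : ℂ) ≠ 0 := by
  obtain ⟨a₁, b₁, a₂, b₂, hW⟩ := hperp
  obtain ⟨g, hg, hψ₃g⟩ :=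
    exists_inner_ne_zero_of_orthogonal_eq_span hW h.notMem_span_pair_of_three
  have hgW : g ∈ (span ℂ {ψ₁, ψ₂})ᗮ := hW ▸ subset_span hg
  obtain ⟨a, b, rfl⟩ : ∃ a b, g = tens a b := by
    rcases hg with rfl | rfl <;> exact ⟨_, _, rfl⟩
  exact ⟨a, b, inner_right_of_mem_orthogonal (subset_span (by simp)) hgW,
    inner_right_of_mem_orthogonal (subset_span (by simp)) hgW, hψ₃g⟩
end

section
/- Let ψ₁, ψ₂, ψ₃ ∈ ℂ² ⊗ ℂ² be linearly independent, and suppose ψ₁ and ψ₂ are both product vectors. Then there exists a product vector φ with ⟨ψ₁, φ⟩ = ⟨ψ₂, φ⟩ = 0 and ⟨ψ₃, φ⟩ ≠ 0. -/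
open Module

section InnerProductSpace

variable {𝕜 E : Type*} [RCLike 𝕜] [NormedAddCommGroup E] [InnerProductSpace 𝕜 E]

theorem linearIndependent_pair_of_inner {x y z : E} (hy : y ≠ 0) (hyz : inner 𝕜 y z = 0)
    (hxz : inner 𝕜 x z ≠ 0) : LinearIndependent 𝕜 ![x, y] := by
  refine linearIndependent_fin2.2 ⟨hy, fun c hc => hxz ?_⟩
  simp only [Matrix.cons_val_one, Matrix.cons_val_zero] at hc
  rw [← hc, inner_smul_left, hyz, mul_zero]

theorem exists_inner_ne_zero_of_finrank_lt [FiniteDimensional 𝕜 E] {ι κ : Type*} [Fintype ι]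
    [Fintype κ] {v : ι → E} {w : κ → E} (hv : LinearIndependent 𝕜 v)
    (hw : LinearIndependent 𝕜 w) (h : finrank 𝕜 E < Fintype.card ι + Fintype.card κ) :
    ∃ i j, inner 𝕜 (v i) (w j) ≠ 0 := by
  by_contra! hvw
  have hdisj : Disjoint (Submodule.span 𝕜 (Set.range v)) (Submodule.span 𝕜 (Set.range w)) :=
    (Submodule.isOrtho_span.2 (by rintro _ ⟨i, rfl⟩ _ ⟨j, rfl⟩; exact hvw i j)).disjoint
  have hcard := (hv.sum_type hw hdisj).fintype_card_le_finrank
  rw [Fintype.card_sum] at hcard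
  omega

end InnerProductSpace

section Tens

variable {ι κ : Type*} [Fintype ι] [Fintype κ]

theorem inner_tens (a c : EuclideanSpace ℂ ι) (b d : EuclideanSpace ℂ κ) :
    inner ℂ (tens a b) (tens c d) = inner ℂ a c * inner ℂ b d := by
  simp only [PiLp.inner_apply, RCLike.inner_apply, tens, map_mul, Fintype.sum_prod_type,
    Finset.sum_mul_sum]
  exact Finset.sum_congr rfl fun i _ => Finset.sum_congr rfl fun j _ => by ring

theorem tens_eq_zero_iff {a : EuclideanSpace ℂ ι} {b : EuclideanSpace ℂ κ} :
    tens a b = 0 ↔ a = 0 ∨ b = 0 := by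
  refine ⟨fun h => ?_, ?_⟩
  · by_contra! hab
    obtain ⟨i, hi⟩ : ∃ i, a i ≠ 0 := by
      by_contra! ha; exact hab.1 (PiLp.ext ha)
    obtain ⟨j, hj⟩ : ∃ j, b j ≠ 0 := by
      by_contra! hb; exact hab.2 (PiLp.ext hb)
    exact mul_ne_zero hi hj (congrArg (· (i, j)) h)
  · rintro (rfl | rfl) <;> ext <;> simp [tens]

theorem Orthonormal.linearIndependent_tens_left {ι' : Type*} {y : ι' → EuclideanSpace ℂ κ}
    (hy : Orthonormal ℂ y) {x : EuclideanSpace ℂ ι} (hx : x ≠ 0) :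
    LinearIndependent ℂ fun j => tens x (y j) :=
  linearIndependent_of_ne_zero_of_inner_eq_zero
    (fun j => tens_eq_zero_iff.not.2 (not_or.2 ⟨hx, hy.ne_zero j⟩))
    fun i j hij => by simp only [inner_tens, hy.2 hij, mul_zero]

theorem Orthonormal.linearIndependent_tens_right {ι' : Type*} {x : ι' → EuclideanSpace ℂ ι}
    (hx : Orthonormal ℂ x) {y : EuclideanSpace ℂ κ} (hy : y ≠ 0) :
    LinearIndependent ℂ fun j => tens (x j) y :=
  linearIndependent_of_ne_zero_of_inner_eq_zero
    (fun j => tens_eq_zero_iff.not.2 (not_or.2 ⟨hx.ne_zero j, hy⟩))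
    fun i j hij => by simp only [inner_tens, hx.2 hij, zero_mul]

end Tens

section Perp

noncomputable def perp (v : EuclideanSpace ℂ (Fin 2)) : EuclideanSpace ℂ (Fin 2) :=
  WithLp.toLp 2 ![starRingEnd ℂ (v 1), -starRingEnd ℂ (v 0)]

theorem inner_perp_left (u v : EuclideanSpace ℂ (Fin 2)) :
    inner ℂ (perp u) v = u 1 * v 0 - u 0 * v 1 := by
  simp only [perp, PiLp.inner_apply, RCLike.inner_apply, Fin.sum_univ_two, Matrix.cons_val_zero,
    Matrix.cons_val_one, RingHomCompTriple.comp_apply, RingHom.id_apply, map_neg]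
  ring

theorem inner_perp_self (v : EuclideanSpace ℂ (Fin 2)) : inner ℂ (perp v) v = 0 := by
  rw [inner_perp_left]; ring

theorem inner_self_perp (v : EuclideanSpace ℂ (Fin 2)) : inner ℂ v (perp v) = 0 :=
  inner_eq_zero_symm.1 (inner_perp_self v)

theorem inner_perp_comm (u v : EuclideanSpace ℂ (Fin 2)) :
    inner ℂ (perp u) v = -inner ℂ (perp v) u := by
  rw [inner_perp_left, inner_perp_left]; ring

theorem inner_perp_perp (u v : EuclideanSpace ℂ (Fin 2)) :
    inner ℂ (perp u) (perp v) = inner ℂ v u := by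
  simp only [perp, PiLp.inner_apply, RCLike.inner_apply, Fin.sum_univ_two, Matrix.cons_val_zero,
    Matrix.cons_val_one, RingHomCompTriple.comp_apply, RingHom.id_apply, map_neg]
  ring

theorem perp_ne_zero {v : EuclideanSpace ℂ (Fin 2)} (hv : v ≠ 0) : perp v ≠ 0 := by
  rwa [← inner_self_ne_zero (𝕜 := ℂ), inner_perp_perp, inner_self_ne_zero]

end Perp

theorem exists_linearIndependent_tens_orthogonal {a₁ b₁ : EuclideanSpace ℂ (Fin 2)}
    (ha₁ : a₁ ≠ 0) (hb₁ : b₁ ≠ 0) (a₂ b₂ : EuclideanSpace ℂ (Fin 2)) :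
    ∃ x y : Fin 2 → EuclideanSpace ℂ (Fin 2),
      LinearIndependent ℂ (fun j => tens (x j) (y j)) ∧
      ∀ j, inner ℂ (tens a₁ b₁) (tens (x j) (y j)) = 0 ∧
        inner ℂ (tens a₂ b₂) (tens (x j) (y j)) = 0 := by
  by_cases ha : inner ℂ (perp a₁) a₂ = 0
  · refine ⟨fun _ => perp a₁, e,
      EuclideanSpace.orthonormal_single.linearIndependent_tens_left (perp_ne_zero ha₁),
      fun j => ⟨?_, ?_⟩⟩
    · rw [inner_tens, inner_self_perp, zero_mul]
    · rw [inner_tens, inner_eq_zero_symm.1 ha, zero_mul]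
  by_cases hb : inner ℂ (perp b₁) b₂ = 0
  · refine ⟨e, fun _ => perp b₁,
      EuclideanSpace.orthonormal_single.linearIndependent_tens_right (perp_ne_zero hb₁),
      fun j => ⟨?_, ?_⟩⟩
    · rw [inner_tens, inner_self_perp, mul_zero]
    · rw [inner_tens, inner_eq_zero_symm.1 hb, mul_zero]
  have hb₂ : b₂ ≠ 0 := by rintro rfl; exact hb (inner_zero_right _)
  refine ⟨![perp a₂, perp a₁], ![perp b₁, perp b₂], ?_, fun j => ?_⟩
  · have hfam : (fun j => tens (![perp a₂, perp a₁] j) (![perp b₁, perp b₂] j)) =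
        ![tens (perp a₂) (perp b₁), tens (perp a₁) (perp b₂)] := by
      ext1 j; fin_cases j <;> rfl
    rw [hfam]
    refine linearIndependent_pair_of_inner (z := tens a₁ (perp b₁))
      (tens_eq_zero_iff.not.2 (not_or.2 ⟨perp_ne_zero ha₁, perp_ne_zero hb₂⟩)) ?_ ?_
    · rw [inner_tens, inner_perp_self, zero_mul]
    · rw [inner_tens, inner_perp_comm]
      exact mul_ne_zero (neg_ne_zero.2 ha) (inner_self_ne_zero.2 (perp_ne_zero hb₁))
  · fin_cases j <;> simp [inner_tens, inner_self_perp]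

theorem stmt_8 (ψ₁ ψ₂ ψ₃ : EuclideanSpace ℂ (Fin 2 × Fin 2))
    (h : LinearIndependent ℂ ![ψ₁, ψ₂, ψ₃])
    (h₁ : ∃ a b, ψ₁ = tens a b) (h₂ : ∃ a b, ψ₂ = tens a b) :
    ∃ (a b : EuclideanSpace ℂ (Fin 2)),
      (inner ℂ ψ₁ (tens a b) : ℂ) = 0 ∧ (inner ℂ ψ₂ (tens a b) : ℂ) = 0 ∧
      (inner ℂ ψ₃ (tens a b) : ℂ) ≠ 0 := by
  obtain ⟨a₁, b₁, rfl⟩ := h₁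
  obtain ⟨a₂, b₂, rfl⟩ := h₂
  obtain ⟨ha₁, hb₁⟩ : a₁ ≠ 0 ∧ b₁ ≠ 0 := by
    simpa [tens_eq_zero_iff, not_or] using h.ne_zero 0
  obtain ⟨x, y, hxy, horth⟩ := exists_linearIndependent_tens_orthogonal ha₁ hb₁ a₂ b₂
  obtain ⟨i, j, hij⟩ := exists_inner_ne_zero_of_finrank_lt h hxy (by simp [finrank_euclideanSpace])
  refine ⟨x j, y j, (horth j).1, (horth j).2, ?_⟩
  fin_cases i
  · exact absurd (horth j).1 hij
  · exact absurd (horth j).2 hij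
  · exact hij
end

section
/- Let ψ₁, ψ₂, ψ₃ ∈ ℂ² ⊗ ℂ² be linearly independent. Then there exists an index x ∈ {1,2,3} and a product vector φ = a ⊗ b such that ⟨ψᵢ, φ⟩ = 0 for both i ≠ x and ⟨ψₓ, φ⟩ ≠ 0. -/
open Submodule

section InnerProductSpace

variable {𝕜 E ι : Type*} [RCLike 𝕜] [NormedAddCommGroup E] [InnerProductSpace 𝕜 E]

theorem LinearIndependent.exists_inner_eq_ite [Finite ι] [DecidableEq ι] {ψ : ι → E}
    (h : LinearIndependent 𝕜 ψ) :
    ∃ w : ι → E, ∀ i j, inner 𝕜 (ψ i) (w j) = if i = j then 1 else 0 := by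
  have (j : ι) : ∃ u ∈ (span 𝕜 (ψ '' {j}ᶜ))ᗮ, inner 𝕜 (ψ j) u ≠ 0 := by
    have : FiniteDimensional 𝕜 (span 𝕜 (ψ '' {j}ᶜ)) := .span_of_finite 𝕜 (Set.toFinite _)
    have := h.notMem_span_image (s := {j}ᶜ) (Set.notMem_compl_iff.2 rfl)
    rw [← orthogonal_orthogonal (span 𝕜 (ψ '' {j}ᶜ)), mem_orthogonal'] at this
    push Not at this
    exact this
  choose u hu hψu using this
  refine ⟨fun j => (inner 𝕜 (ψ j) (u j))⁻¹ • u j, fun i j => ?_⟩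
  rw [inner_smul_right]
  split_ifs with hij
  · subst hij; exact inv_mul_cancel₀ (hψu i)
  · rw [(mem_orthogonal _ _).1 (hu j) (ψ i) (subset_span ⟨i, hij, rfl⟩), mul_zero]

theorem exists_ne_zero_forall_inner_eq_zero [FiniteDimensional 𝕜 E] [Fintype ι] (ψ : ι → E)
    (hcard : Fintype.card ι < Module.finrank 𝕜 E) :
    ∃ φ : E, φ ≠ 0 ∧ ∀ i, inner 𝕜 (ψ i) φ = 0 := by
  have hK : span 𝕜 (Set.range ψ) ≠ ⊤ := fun htop => by
    have := finrank_range_le_card (R := 𝕜) ψ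
    rw [Set.finrank, htop, finrank_top] at this
    omega
  obtain ⟨φ, hφ, hφ0⟩ := exists_mem_ne_zero_of_ne_bot (mt orthogonal_eq_bot_iff.1 hK)
  exact ⟨φ, hφ0, fun i => (mem_orthogonal _ _).1 hφ _ (subset_span ⟨i, rfl⟩)⟩

end InnerProductSpace

theorem eq_zero_and_eq_zero_of_forall_quadratic_ne_zero {K : Type*} [Field K] [IsAlgClosed K]
    [NeZero (2 : K)] {a b c : K} (h : ∀ s, a * (s * s) + b * s + c ≠ 0) : a = 0 ∧ b = 0 := by
  have ha : a = 0 := by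
    by_contra ha
    obtain ⟨s, hs⟩ := exists_quadratic_eq_zero ha (IsAlgClosed.exists_eq_mul_self _)
    exact h s hs
  refine ⟨ha, ?_⟩
  by_contra hb
  apply h (-c / b)
  field_simp
  rw [ha]; ring

abbrev TwoQubit := EuclideanSpace ℂ (Fin 2 × Fin 2)

namespace TwoQubit

/-- The determinant of the coefficient matrix `(v (i, j))`; `coeffPolar` is its polar form. -/
def coeffDet (v : TwoQubit) : ℂ := v (0, 0) * v (1, 1) - v (0, 1) * v (1, 0)

def coeffPolar (u : TwoQubit) : TwoQubit →ₗ[ℂ] ℂ where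
  toFun v := u (0, 0) * v (1, 1) + u (1, 1) * v (0, 0) - u (0, 1) * v (1, 0) - u (1, 0) * v (0, 1)
  map_add' v v' := by simp only [PiLp.add_apply]; ring
  map_smul' c v := by simp only [PiLp.smul_apply, smul_eq_mul, RingHom.id_apply]; ring

theorem coeffDet_add_smul (u v : TwoQubit) (s : ℂ) :
    coeffDet (u + s • v) = coeffDet v * (s * s) + coeffPolar v u * s + coeffDet u := by
  simp only [coeffDet, coeffPolar, LinearMap.coe_mk, AddHom.coe_mk, PiLp.add_apply,
    PiLp.smul_apply, smul_eq_mul]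
  ring

theorem eq_zero_of_coeffPolar_eq_zero {u : TwoQubit} (hu : coeffPolar u = 0) : u = 0 := by
  have h (i j : Fin 2) : coeffPolar u (EuclideanSpace.single (i, j) 1) = 0 := by rw [hu]; rfl
  ext ⟨i, j⟩
  fin_cases i <;> fin_cases j
  all_goals
    first
    | simpa [coeffPolar] using h 1 1
    | simpa [coeffPolar] using h 1 0
    | simpa [coeffPolar] using h 0 1
    | simpa [coeffPolar] using h 0 0

theorem mul_eq_mul_of_coeffDet_eq_zero {v : TwoQubit} (hv : coeffDet v = 0) (i j k l : Fin 2) :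
    v (k, j) * v (i, l) = v (k, l) * v (i, j) := by
  unfold coeffDet at hv
  fin_cases i <;> fin_cases j <;> fin_cases k <;> fin_cases l <;>
    simp only [Fin.zero_eta, Fin.mk_one] <;>
    first | ring1 | linear_combination hv | linear_combination -hv

theorem exists_tens_eq_of_coeffDet_eq_zero {v : TwoQubit} (hv : coeffDet v = 0) :
    ∃ a b, tens a b = v := by
  by_cases h0 : v = 0
  · exact ⟨0, 0, by ext; simp [tens, h0]⟩
  obtain ⟨⟨i, j⟩, hij⟩ : ∃ p, v p ≠ 0 := by
    by_contra! h
    exact h0 (by ext p; exact h p)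
  refine ⟨WithLp.toLp 2 fun k => v (k, j), WithLp.toLp 2 fun l => v (i, l) / v (i, j), ?_⟩
  ext ⟨k, l⟩
  change v (k, j) * (v (i, l) / v (i, j)) = v (k, l)
  rw [mul_div_assoc', div_eq_iff hij, mul_eq_mul_of_coeffDet_eq_zero hv]

variable {ι : Type*}

def IsConclusivelyLocallyIdentifiable (ψ : ι → TwoQubit) (x : ι) : Prop :=
  ∃ a b : EuclideanSpace ℂ (Fin 2),
    (∀ i, i ≠ x → inner ℂ (ψ i) (tens a b) = 0) ∧ inner ℂ (ψ x) (tens a b) ≠ 0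

variable {ψ : ι → TwoQubit}

theorem coeffDet_ne_zero_of_not_isConclusivelyLocallyIdentifiable {x : ι}
    (hψ : ¬ IsConclusivelyLocallyIdentifiable ψ x) {z : TwoQubit}
    (hz : ∀ i, i ≠ x → inner ℂ (ψ i) z = 0) (hzx : inner ℂ (ψ x) z ≠ 0) : coeffDet z ≠ 0 :=
  fun hdet => by
    obtain ⟨a, b, rfl⟩ := exists_tens_eq_of_coeffDet_eq_zero hdet
    exact hψ ⟨a, b, hz, hzx⟩

theorem coeffDet_eq_zero_and_coeffPolar_eq_zero [DecidableEq ι] {x : ι}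
    (hψ : ¬ IsConclusivelyLocallyIdentifiable ψ x) {w : TwoQubit}
    (hw : ∀ i, inner ℂ (ψ i) w = if i = x then 1 else 0) {k : TwoQubit}
    (hk : ∀ i, inner ℂ (ψ i) k = 0) : coeffDet k = 0 ∧ coeffPolar k w = 0 := by
  refine eq_zero_and_eq_zero_of_forall_quadratic_ne_zero (c := coeffDet w) fun s => ?_
  rw [← coeffDet_add_smul]
  refine coeffDet_ne_zero_of_not_isConclusivelyLocallyIdentifiable hψ (fun i hi => ?_) ?_
  · simp [hw, hk, hi]
  · simp [hw, hk]

theorem coeffPolar_eq_zero_of_forall_inner_eq_zero [Fintype ι] [DecidableEq ι] [Nonempty ι]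
    (hψ : ∀ x, ¬ IsConclusivelyLocallyIdentifiable ψ x) {w : ι → TwoQubit}
    (hw : ∀ i j, inner ℂ (ψ i) (w j) = if i = j then 1 else 0) {φ : TwoQubit}
    (hφ : ∀ i, inner ℂ (ψ i) φ = 0) : coeffPolar φ = 0 := by
  have hdet {k : TwoQubit} (hk : ∀ i, inner ℂ (ψ i) k = 0) : coeffDet k = 0 :=
    (coeffDet_eq_zero_and_coeffPolar_eq_zero (hψ (Classical.arbitrary ι)) (hw · _) hk).1
  have hK {k : TwoQubit} (hk : ∀ i, inner ℂ (ψ i) k = 0) : coeffPolar φ k = 0 := by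
    have := coeffDet_add_smul k φ 1
    rw [hdet hk, hdet hφ, hdet fun i => by simp [hk, hφ]] at this
    simpa using this.symm
  ext z
  -- `z` is `∑ j, ⟪ψ j, z⟫ • w j` plus a vector orthogonal to every `ψ i`
  have hz : ∀ i, inner ℂ (ψ i) (z - ∑ j, inner ℂ (ψ j) z • w j) = 0 := by
    simp [hw]
  calc coeffPolar φ z
      = coeffPolar φ (z - ∑ j, inner ℂ (ψ j) z • w j)
        + ∑ j, inner ℂ (ψ j) z * coeffPolar φ (w j) := by simp
    _ = 0 := by
      simp [hK hz, (coeffDet_eq_zero_and_coeffPolar_eq_zero (hψ _) (hw · _) hφ).2]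

theorem exists_isConclusivelyLocallyIdentifiable [Fintype ι] [Nonempty ι]
    (h : LinearIndependent ℂ ψ) (hcard : Fintype.card ι < 4) :
    ∃ x, IsConclusivelyLocallyIdentifiable ψ x := by
  classical
  by_contra! hψ
  obtain ⟨w, hw⟩ := h.exists_inner_eq_ite
  obtain ⟨φ, hφ0, hφ⟩ := exists_ne_zero_forall_inner_eq_zero (𝕜 := ℂ) ψ (by simpa using hcard)
  exact hφ0 (eq_zero_of_coeffPolar_eq_zero (coeffPolar_eq_zero_of_forall_inner_eq_zero hψ hw hφ))

end TwoQubit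

theorem stmt_9 (ψ : Fin 3 → EuclideanSpace ℂ (Fin 2 × Fin 2))
    (h : LinearIndependent ℂ ψ) :
    ∃ (x : Fin 3) (a b : EuclideanSpace ℂ (Fin 2)),
      (∀ i, i ≠ x → (inner ℂ (ψ i) (tens a b) : ℂ) = 0) ∧
      (inner ℂ (ψ x) (tens a b) : ℂ) ≠ 0 :=
  TwoQubit.exists_isConclusivelyLocallyIdentifiable h (by simp)
end
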